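/- arXiv:2412.01732 — 2 statements merged into one kernel-verified Lean document; each statement's English description precedes it below -/
import Mathlib

section
/- The quantum Wasserstein-1 distance of order one between two states on an n-fold tensor product, with respect to the Lipschitz norm ‖H‖_L := 2·max_i min_{H̃ on the complement of site i} ‖H − Id_i ⊗ H̃‖_∞, satisfies (1/2)‖ρ − σ‖₁ ≤ ‖ρ − σ‖_{W₁} ≤ n·‖ρ − σ‖₁ for all states ρ, σ. -/
open scoped BigOperators Matrix Classical ComplexOrder

noncomputable section

namespace Paper

variable {n : Type*} [Fintype n] [DecidableEq n]

/-- Operator (spectral) norm of a matrix, via the Euclidean operator norm. -/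
def opNorm (A : Matrix n n ℂ) : ℝ :=
  ‖LinearMap.toContinuousLinearMap (Matrix.toEuclideanLin A)‖

/-- Functional calculus on Hermitian matrices (returns `0` on non-Hermitian input). -/
def matFun (f : ℝ → ℝ) (A : Matrix n n ℂ) : Matrix n n ℂ :=
  if h : A.IsHermitian then
    (h.eigenvectorUnitary : Matrix n n ℂ) *
      Matrix.diagonal (fun i => (f (h.eigenvalues i) : ℂ)) *
      (star h.eigenvectorUnitary : Matrix n n ℂ)
  else 0

/-- Matrix logarithm (spectral). -/
def matLog (A : Matrix n n ℂ) : Matrix n n ℂ := matFun Real.log A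

/-- Matrix exponential (spectral, for Hermitian matrices). -/
def matExp (A : Matrix n n ℂ) : Matrix n n ℂ := matFun Real.exp A

/-- Trace norm (of a Hermitian matrix: the sum of absolute values of eigenvalues). -/
def traceNorm (A : Matrix n n ℂ) : ℝ :=
  if h : A.IsHermitian then ∑ i, |h.eigenvalues i| else 0

/-- Umegaki relative entropy `D(ρ‖σ) = Tr[ρ(log ρ − log σ)]`. -/
def relEnt (ρ σ : Matrix n n ℂ) : ℝ :=
  (Matrix.trace (ρ * (matLog ρ - matLog σ))).re

/-- von Neumann entropy. -/
def vnEnt (ρ : Matrix n n ℂ) : ℝ := -(Matrix.trace (ρ * matLog ρ)).re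

/-- A quantum state: positive semidefinite with unit trace. -/
def IsState (ρ : Matrix n n ℂ) : Prop := ρ.PosSemidef ∧ ρ.trace = 1

/-- Entropy production of a generator `L` with respect to the reference state `σ`. -/
def entProd (L : Matrix n n ℂ → Matrix n n ℂ) (σ ρ : Matrix n n ℂ) : ℝ :=
  -(Matrix.trace (L ρ * (matLog ρ - matLog σ))).re

end Paper
namespace Paper

variable {ι : Type*} [Fintype ι] [DecidableEq ι] {d : ι → Type*}
  [∀ i, Fintype (d i)] [∀ i, DecidableEq (d i)]

/-- Embedding `Id_i ⊗ H̃` of an operator `H̃` on the complement of the site `i` into the full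
multipartite space. -/
def embedAt (i : ι) (M : Matrix (∀ j : {j : ι // j ≠ i}, d j.1) (∀ j : {j : ι // j ≠ i}, d j.1) ℂ) :
    Matrix (∀ j, d j) (∀ j, d j) ℂ :=
  fun x y => if x i = y i then M (fun j => x j.1) (fun j => y j.1) else 0

/-- The Lipschitz norm `‖H‖_L = 2 maxᵢ min_{H̃} ‖H − Id_i ⊗ H̃‖_∞` on a multipartite space. -/
def lipNorm (H : Matrix (∀ j, d j) (∀ j, d j) ℂ) : ℝ :=
  2 * ⨆ i : ι, ⨅ M : Matrix (∀ j : {j : ι // j ≠ i}, d j.1) (∀ j : {j : ι // j ≠ i}, d j.1) ℂ,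
    opNorm (H - embedAt i M)

/-- The quantum Wasserstein norm of order 1:
`‖X‖_{W₁} = max{Tr[H X] : H self-adjoint, ‖H‖_L ≤ 1}`. -/
def w1Norm (X : Matrix (∀ j, d j) (∀ j, d j) ℂ) : ℝ :=
  sSup {r : ℝ | ∃ H : Matrix (∀ j, d j) (∀ j, d j) ℂ,
    H.IsHermitian ∧ lipNorm H ≤ 1 ∧ r = (Matrix.trace (H * X)).re}

/-- Partial trace over the sites in `J`, giving an operator on the complementary sites. -/
def ptraceSet (J : Finset ι) (X : Matrix (∀ j, d j) (∀ j, d j) ℂ) :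
    Matrix (∀ j : {j : ι // j ∉ J}, d j.1) (∀ j : {j : ι // j ∉ J}, d j.1) ℂ :=
  fun x y => ∑ z : ∀ j : {j : ι // j ∈ J}, d j.1,
    X (fun j => if h : j ∈ J then z ⟨j, h⟩ else x ⟨j, h⟩)
      (fun j => if h : j ∈ J then z ⟨j, h⟩ else y ⟨j, h⟩)

end Paper

/-!
Lower bound: `H = sign(ρ - σ) / 2` has `‖H‖_∞ ≤ 1/2`, hence `‖H‖_L ≤ 1`, and
`Tr[H(ρ - σ)] = ‖ρ - σ‖₁ / 2`.

Upper bound: `ρ - σ` is traceless, so `Tr[H(ρ - σ)] = Tr[(H - c)(ρ - σ)] ≤ ‖H - c‖_∞ ‖ρ - σ‖₁` for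
every scalar `c`. The map `Φᵢ A = Idᵢ ⊗ Trᵢ A / dᵢ` is an average of compressions of `A` followed
by the *-homomorphism `Idᵢ ⊗ ·`, hence contracts the operator norm, and it fixes every
`Idᵢ ⊗ H̃`; therefore `‖H - Φᵢ H‖ ≤ 2 ‖H - Idᵢ ⊗ H̃‖`, i.e. `‖H - Φᵢ H‖ ≤ ‖H‖_L`. The `Φᵢ` commute
and are idempotent, so their composite over all sites is fixed by every `Φᵢ`, hence a scalar `c`,
and telescoping along the composite gives `‖H - c‖_∞ ≤ n ‖H‖_L`.
-/

open scoped Matrix.Norms.L2Operator Kronecker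

namespace Matrix

variable {𝕜 m n : Type*} [RCLike 𝕜] [Fintype m] [Fintype n] [DecidableEq n]

theorem l2_opNorm_entry_le (A : Matrix m n 𝕜) (i : m) (j : n) : ‖A i j‖ ≤ ‖A‖ := by
  have h := A.l2_opNorm_mulVec (EuclideanSpace.single j 1)
  rw [PiLp.norm_single, norm_one, mul_one] at h
  refine le_trans (le_of_eq ?_) ((PiLp.norm_apply_le _ i).trans h)
  simp [EuclideanSpace.single]

theorem l2_opNorm_one_le : ‖(1 : Matrix n n 𝕜)‖ ≤ 1 := by
  rw [← diagonal_one, l2_opNorm_diagonal]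
  exact pi_norm_le_iff_of_nonneg zero_le_one |>.mpr fun _ => by simp

theorem l2_opNorm_conjTranspose_mul_mul_le [DecidableEq m] {W : Matrix m n 𝕜} (hW : Wᴴ * W = 1)
    (A : Matrix m m 𝕜) : ‖Wᴴ * A * W‖ ≤ ‖A‖ := by
  have hW1 : ‖W‖ ≤ 1 := by
    have := l2_opNorm_conjTranspose_mul_self W
    rw [hW] at this
    nlinarith [l2_opNorm_one_le (𝕜 := 𝕜) (n := n), norm_nonneg W]
  calc ‖Wᴴ * A * W‖ ≤ ‖Wᴴ‖ * ‖A‖ * ‖W‖ :=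
        (l2_opNorm_mul _ _).trans (by gcongr; exact l2_opNorm_mul _ _)
    _ ≤ 1 * ‖A‖ * 1 := by rw [l2_opNorm_conjTranspose]; gcongr
    _ = ‖A‖ := by ring

theorem l2_opNorm_submatrix_le [DecidableEq m] (A : Matrix m m 𝕜) {f : n → m}
    (hf : Function.Injective f) : ‖A.submatrix f f‖ ≤ ‖A‖ := by
  set W : Matrix m n 𝕜 := (1 : Matrix m m 𝕜).submatrix id f
  have hWA : ∀ B : Matrix m m 𝕜, Wᴴ * B * W = B.submatrix f f := fun B => by
    ext x y
    simp [W, mul_apply, one_apply]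
  have hW : Wᴴ * W = 1 := by
    simpa [submatrix_one f hf] using hWA 1
  simpa [hWA] using l2_opNorm_conjTranspose_mul_mul_le hW A

end Matrix

theorem Equiv.piSplitAt_symm_eq_update {α : Type*} [DecidableEq α] {β : α → Type*} (i : α)
    (f : ∀ j, β j) (a : β i) : (piSplitAt i β).symm (a, fun j => f j) = Function.update f i a := by
  funext j
  by_cases h : j = i
  · subst h; simp
  · simp [h]

namespace Paper

section SingleSystem

variable {n : Type*} [Fintype n] [DecidableEq n]

theorem opNorm_eq_norm (A : Matrix n n ℂ) : opNorm A = ‖A‖ := rfl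

theorem matFun_isHermitian (f : ℝ → ℝ) (A : Matrix n n ℂ) : (matFun f A).IsHermitian := by
  unfold matFun
  split_ifs
  · refine Matrix.isHermitian_mul_mul_conjTranspose _ ?_
    simp [Matrix.IsHermitian, Matrix.diagonal_conjTranspose, Pi.star_def]
  · exact Matrix.isHermitian_zero

theorem norm_matFun_le {A : Matrix n n ℂ} (hA : A.IsHermitian) (f : ℝ → ℝ) {r : ℝ}
    (hr : 0 ≤ r) (hf : ∀ i, |f (hA.eigenvalues i)| ≤ r) : ‖matFun f A‖ ≤ r := by
  rw [matFun, dif_pos hA, ← Unitary.coe_star, CStarRing.norm_mul_coe_unitary,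
    CStarRing.norm_coe_unitary_mul, Matrix.l2_opNorm_diagonal]
  exact pi_norm_le_iff_of_nonneg hr |>.mpr fun i => by simpa using hf i

theorem star_eigenvectorUnitary_mul_matFun_mul {A : Matrix n n ℂ} (hA : A.IsHermitian)
    (f : ℝ → ℝ) :
    star (hA.eigenvectorUnitary : Matrix n n ℂ) * matFun f A * hA.eigenvectorUnitary
      = Matrix.diagonal fun i => (f (hA.eigenvalues i) : ℂ) := by
  rw [matFun, dif_pos hA]
  simp only [← Matrix.mul_assoc, Unitary.coe_star_mul_self, Matrix.one_mul]
  simp only [Matrix.mul_assoc, Unitary.coe_star_mul_self, Matrix.mul_one]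

theorem trace_mul_eq_sum_eigenvalues {B : Matrix n n ℂ} (hB : B.IsHermitian) (A : Matrix n n ℂ) :
    (A * B).trace = ∑ j, (star (hB.eigenvectorUnitary : Matrix n n ℂ) * A
      * hB.eigenvectorUnitary) j j * hB.eigenvalues j := by
  conv_lhs => rw [hB.spectral_theorem, Unitary.conjStarAlgAut_apply, ← Matrix.mul_assoc,
    ← Matrix.mul_assoc, Matrix.trace_mul_comm, ← Matrix.mul_assoc, ← Matrix.mul_assoc]
  simp [Matrix.trace, Matrix.mul_diagonal]

theorem abs_re_trace_mul_le (A : Matrix n n ℂ) {B : Matrix n n ℂ} (hB : B.IsHermitian) :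
    |(A * B).trace.re| ≤ ‖A‖ * traceNorm B := by
  have hentry : ∀ j, ‖(star (hB.eigenvectorUnitary : Matrix n n ℂ) * A
      * hB.eigenvectorUnitary) j j‖ ≤ ‖A‖ := fun j =>
    (Matrix.l2_opNorm_entry_le _ j j).trans_eq <| by
      rw [← Unitary.coe_star, CStarRing.norm_mul_coe_unitary, CStarRing.norm_coe_unitary_mul]
  rw [trace_mul_eq_sum_eigenvalues hB, traceNorm, dif_pos hB, Complex.re_sum, Finset.mul_sum]
  refine (Finset.abs_sum_le_sum_abs _ _).trans (Finset.sum_le_sum fun j _ => ?_)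
  rw [Complex.re_mul_ofReal, abs_mul]
  gcongr
  exact (Complex.abs_re_le_norm _).trans (hentry j)

theorem traceNorm_nonneg (A : Matrix n n ℂ) : 0 ≤ traceNorm A := by
  unfold traceNorm
  split_ifs <;> positivity

end SingleSystem

section Multipartite

variable {ι : Type*} [DecidableEq ι] {d : ι → Type*} [∀ i, DecidableEq (d i)]

theorem embedAt_eq_one_kronecker (i : ι)
    (M : Matrix (∀ j : {j : ι // j ≠ i}, d j.1) (∀ j : {j : ι // j ≠ i}, d j.1) ℂ) :
    embedAt i M = ((1 : Matrix (d i) (d i) ℂ) ⊗ₖ M).submatrix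
      (Equiv.piSplitAt i d) (Equiv.piSplitAt i d) := by
  ext x y
  simp [embedAt, Matrix.one_apply, ite_mul]

variable [∀ i, Fintype (d i)]

/-- `Φᵢ A = Idᵢ ⊗ Trᵢ A / dᵢ`, the Heisenberg-picture replacement of site `i` by the maximally
mixed state. -/
def depolarizeAt (i : ι) (A : Matrix (∀ j, d j) (∀ j, d j) ℂ) : Matrix (∀ j, d j) (∀ j, d j) ℂ :=
  fun x y => if x i = y i then
    (Fintype.card (d i) : ℂ)⁻¹ * ∑ a, A (Function.update x i a) (Function.update y i a)
  else 0

theorem depolarizeAt_sub (i : ι) (A B : Matrix (∀ j, d j) (∀ j, d j) ℂ) :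
    depolarizeAt i (A - B) = depolarizeAt i A - depolarizeAt i B := by
  ext x y
  by_cases h : x i = y i <;> simp [depolarizeAt, h, mul_sub]

theorem depolarizeAt_comm (i j : ι) (A : Matrix (∀ j, d j) (∀ j, d j) ℂ) :
    depolarizeAt i (depolarizeAt j A) = depolarizeAt j (depolarizeAt i A) := by
  rcases eq_or_ne i j with rfl | hij
  · rfl
  ext x y
  by_cases hi : x i = y i <;> by_cases hj : x j = y j <;>
    simp [depolarizeAt, hi, hj, hij, hij.symm, Finset.mul_sum]
  rw [Finset.sum_comm]
  refine Finset.sum_congr rfl fun b _ => Finset.sum_congr rfl fun a _ => ?_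
  rw [Function.update_comm hij, Function.update_comm hij]
  ring

theorem apply_eq_zero_of_depolarizeAt_eq {A : Matrix (∀ j, d j) (∀ j, d j) ℂ} {i : ι}
    (h : depolarizeAt i A = A) {x y : ∀ j, d j} (hxy : x i ≠ y i) : A x y = 0 := by
  rw [← h]
  simp [depolarizeAt, hxy]

theorem apply_update_update_of_depolarizeAt_eq {A : Matrix (∀ j, d j) (∀ j, d j) ℂ} {i : ι}
    (h : depolarizeAt i A = A) (x : ∀ j, d j) (b : d i) :
    A (Function.update x i b) (Function.update x i b) = A x x := by
  rw [← h]
  simp [depolarizeAt]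

def depolarizeList (l : List ι) (A : Matrix (∀ j, d j) (∀ j, d j) ℂ) :
    Matrix (∀ j, d j) (∀ j, d j) ℂ :=
  l.foldr depolarizeAt A

theorem depolarizeAt_eq_embedAt (i : ι) (A : Matrix (∀ j, d j) (∀ j, d j) ℂ) :
    depolarizeAt i A = embedAt i ((Fintype.card (d i) : ℂ)⁻¹ • ∑ a,
      A.submatrix (fun x => (Equiv.piSplitAt i d).symm (a, x))
        (fun x => (Equiv.piSplitAt i d).symm (a, x))) := by
  ext x y
  by_cases h : x i = y i <;>
    simp [depolarizeAt, embedAt, h, Matrix.sum_apply, Equiv.piSplitAt_symm_eq_update]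

theorem depolarizeAt_embedAt (i : ι) [Nonempty (d i)]
    (M : Matrix (∀ j : {j : ι // j ≠ i}, d j.1) (∀ j : {j : ι // j ≠ i}, d j.1) ℂ) :
    depolarizeAt i (embedAt i M) = embedAt i M := by
  rw [depolarizeAt_eq_embedAt]
  congr 1
  have : ∀ a : d i, (embedAt i M).submatrix (fun x => (Equiv.piSplitAt i d).symm (a, x))
      (fun x => (Equiv.piSplitAt i d).symm (a, x)) = M := fun a => by
    ext x y
    simp [embedAt_eq_one_kronecker]
  rw [Finset.sum_congr rfl fun a _ => this a, Finset.sum_const, Finset.card_univ,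
    ← Nat.cast_smul_eq_nsmul ℂ, smul_smul, inv_mul_cancel₀ (by simp), one_smul]

theorem depolarizeAt_depolarizeAt (i : ι) [Nonempty (d i)] (A : Matrix (∀ j, d j) (∀ j, d j) ℂ) :
    depolarizeAt i (depolarizeAt i A) = depolarizeAt i A := by
  conv_lhs => rw [depolarizeAt_eq_embedAt i A, depolarizeAt_embedAt]
  rw [depolarizeAt_eq_embedAt]

theorem depolarizeAt_depolarizeList [∀ i, Nonempty (d i)] {i : ι} {l : List ι} (h : i ∈ l)
    (A : Matrix (∀ j, d j) (∀ j, d j) ℂ) :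
    depolarizeAt i (depolarizeList l A) = depolarizeList l A := by
  induction l with
  | nil => simp at h
  | cons j t ih =>
    simp only [depolarizeList, List.foldr_cons] at ih ⊢
    rcases List.mem_cons.mp h with rfl | h
    · exact depolarizeAt_depolarizeAt _ _
    · rw [depolarizeAt_comm, ih h]

variable [Fintype ι]

def embedAtStarAlgHom (i : ι) :
    Matrix (∀ j : {j : ι // j ≠ i}, d j.1) (∀ j : {j : ι // j ≠ i}, d j.1) ℂ →⋆ₐ[ℂ]
      Matrix (∀ j, d j) (∀ j, d j) ℂ where
  toFun := embedAt i
  map_one' := by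
    simp [embedAt_eq_one_kronecker, Matrix.submatrix_one_equiv]
  map_mul' M N := by
    simp [embedAt_eq_one_kronecker, ← Matrix.mul_kronecker_mul]
  map_zero' := by simp [embedAt_eq_one_kronecker]
  map_add' M N := by simp [embedAt_eq_one_kronecker, Matrix.kronecker_add, Matrix.submatrix_add]
  commutes' c := by
    simp [embedAt_eq_one_kronecker, Algebra.algebraMap_eq_smul_one, Matrix.kronecker_smul,
      Matrix.submatrix_smul, Matrix.submatrix_one_equiv]
  map_star' M := by
    simp [embedAt_eq_one_kronecker, Matrix.star_eq_conjTranspose, Matrix.conjTranspose_kronecker,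
      Matrix.conjTranspose_submatrix]

theorem embedAtStarAlgHom_apply (i : ι)
    (M : Matrix (∀ j : {j : ι // j ≠ i}, d j.1) (∀ j : {j : ι // j ≠ i}, d j.1) ℂ) :
    embedAtStarAlgHom i M = embedAt i M := rfl

theorem norm_embedAt_le (i : ι)
    (M : Matrix (∀ j : {j : ι // j ≠ i}, d j.1) (∀ j : {j : ι // j ≠ i}, d j.1) ℂ) :
    ‖embedAt i M‖ ≤ ‖M‖ :=
  NonUnitalStarAlgHom.norm_apply_le (embedAtStarAlgHom i) M

theorem iInf_opNorm_sub_embedAt_le (i : ι) (H : Matrix (∀ j, d j) (∀ j, d j) ℂ) :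
    ⨅ M : Matrix (∀ j : {j : ι // j ≠ i}, d j.1) (∀ j : {j : ι // j ≠ i}, d j.1) ℂ,
      opNorm (H - embedAt i M) ≤ opNorm H :=
  (ciInf_le ⟨0, Set.forall_mem_range.2 fun _ => norm_nonneg _⟩ 0).trans_eq <| by
    rw [← embedAtStarAlgHom_apply, map_zero, sub_zero]
    rfl

theorem lipNorm_le_two_mul_opNorm (H : Matrix (∀ j, d j) (∀ j, d j) ℂ) :
    lipNorm H ≤ 2 * opNorm H := by
  rw [lipNorm]
  gcongr
  exact Real.iSup_le (fun i => iInf_opNorm_sub_embedAt_le i H) (norm_nonneg _)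

variable [∀ i, Nonempty (d i)]

theorem norm_depolarizeAt_le (i : ι) (A : Matrix (∀ j, d j) (∀ j, d j) ℂ) :
    ‖depolarizeAt i A‖ ≤ ‖A‖ := by
  rw [depolarizeAt_eq_embedAt]
  refine (norm_embedAt_le i _).trans ?_
  rw [norm_smul, norm_inv, Complex.norm_natCast, inv_mul_le_iff₀ (by positivity)]
  calc _ ≤ ∑ _a : d i, ‖A‖ := (norm_sum_le _ _).trans <| Finset.sum_le_sum fun a _ =>
        Matrix.l2_opNorm_submatrix_le A fun x y h => by simpa using h
    _ = Fintype.card (d i) * ‖A‖ := by simp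

theorem exists_eq_smul_one_of_forall_depolarizeAt_eq
    {A : Matrix (∀ j, d j) (∀ j, d j) ℂ} (h : ∀ i, depolarizeAt i A = A) :
    ∃ c : ℂ, A = c • 1 := by
  have hdiag : ∀ (s : Finset ι) (x y : ∀ j, d j), (∀ j ∉ s, x j = y j) → A x x = A y y := by
    intro s
    induction s using Finset.induction_on with
    | empty => exact fun x y hxy => by rw [funext fun j => hxy j (Finset.notMem_empty j)]
    | insert i s _ ih =>
      intro x y hxy
      rw [← apply_update_update_of_depolarizeAt_eq (h i) x (y i)]
      refine ih _ _ fun j hj => ?_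
      rcases eq_or_ne j i with rfl | hji
      · simp
      · simpa [hji] using hxy j (by simp [hji, hj])
  refine ⟨A (Classical.arbitrary _) (Classical.arbitrary _), ?_⟩
  ext x y
  rcases eq_or_ne x y with rfl | hxy
  · simpa using hdiag Finset.univ x _ (by simp)
  · obtain ⟨i, hi⟩ := Function.ne_iff.mp hxy
    simpa [Matrix.one_apply_ne hxy] using apply_eq_zero_of_depolarizeAt_eq (h i) hi

theorem norm_sub_depolarizeList_le (l : List ι) {A : Matrix (∀ j, d j) (∀ j, d j) ℂ} {r : ℝ}
    (hr : ∀ i ∈ l, ‖A - depolarizeAt i A‖ ≤ r) : ‖A - depolarizeList l A‖ ≤ l.length * r := by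
  induction l with
  | nil => simp [depolarizeList]
  | cons i t ih =>
    have hsplit : A - depolarizeList (i :: t) A
        = (A - depolarizeAt i A) + depolarizeAt i (A - depolarizeList t A) := by
      rw [depolarizeAt_sub, depolarizeList, List.foldr_cons, ← depolarizeList]
      abel
    rw [hsplit, List.length_cons, Nat.cast_succ]
    calc _ ≤ ‖A - depolarizeAt i A‖ + ‖A - depolarizeList t A‖ :=
          (norm_add_le _ _).trans (by gcongr; exact norm_depolarizeAt_le _ _)
      _ ≤ r + t.length * r :=
          add_le_add (hr i List.mem_cons_self) (ih fun j hj => hr j (List.mem_cons_of_mem i hj))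
      _ = _ := by ring

theorem norm_sub_depolarizeAt_le_lipNorm (i : ι) (H : Matrix (∀ j, d j) (∀ j, d j) ℂ) :
    ‖H - depolarizeAt i H‖ ≤ lipNorm H := by
  have hM : ∀ M, ‖H - depolarizeAt i H‖ ≤ 2 * opNorm (H - embedAt i M) := fun M => by
    have hsplit : H - depolarizeAt i H
        = (H - embedAt i M) - depolarizeAt i (H - embedAt i M) := by
      rw [depolarizeAt_sub, depolarizeAt_embedAt]
      abel
    rw [hsplit, opNorm_eq_norm, two_mul]
    exact (norm_sub_le _ _).trans (by gcongr; exact norm_depolarizeAt_le _ _)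
  have hbdd : BddAbove (Set.range fun i : ι =>
      ⨅ M : Matrix (∀ j : {j : ι // j ≠ i}, d j.1) (∀ j : {j : ι // j ≠ i}, d j.1) ℂ,
        opNorm (H - embedAt i M)) :=
    ⟨opNorm H, Set.forall_mem_range.2 fun i => iInf_opNorm_sub_embedAt_le i H⟩
  calc ‖H - depolarizeAt i H‖
      ≤ 2 * ⨅ M : Matrix (∀ j : {j : ι // j ≠ i}, d j.1) (∀ j : {j : ι // j ≠ i}, d j.1) ℂ,
        opNorm (H - embedAt i M) := by
        rw [← div_le_iff₀' two_pos]
        exact le_ciInf fun M => by linarith [hM M]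
    _ ≤ lipNorm H := by
        rw [lipNorm]
        gcongr
        exact le_ciSup hbdd i

theorem exists_norm_sub_smul_one_le (H : Matrix (∀ j, d j) (∀ j, d j) ℂ) :
    ∃ c : ℂ, ‖H - c • 1‖ ≤ Fintype.card ι * lipNorm H := by
  obtain ⟨c, hc⟩ := exists_eq_smul_one_of_forall_depolarizeAt_eq
    fun i => depolarizeAt_depolarizeList (Finset.mem_toList.2 (Finset.mem_univ i)) H
  refine ⟨c, ?_⟩
  rw [← hc, ← Finset.card_univ, ← Finset.length_toList]
  exact norm_sub_depolarizeList_le _ fun i _ => norm_sub_depolarizeAt_le_lipNorm i H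

theorem re_trace_mul_le_card_mul_traceNorm
    {H X : Matrix (∀ j, d j) (∀ j, d j) ℂ} (hH : lipNorm H ≤ 1) (hX : X.IsHermitian)
    (hX₀ : X.trace = 0) : (H * X).trace.re ≤ Fintype.card ι * traceNorm X := by
  obtain ⟨c, hc⟩ := exists_norm_sub_smul_one_le H
  have htrace : (H * X).trace = ((H - c • 1) * X).trace := by
    simp [Matrix.sub_mul, hX₀]
  calc (H * X).trace.re ≤ ‖H - c • 1‖ * traceNorm X :=
        htrace ▸ (le_abs_self _).trans (abs_re_trace_mul_le _ hX)
    _ ≤ Fintype.card ι * lipNorm H * traceNorm X := by gcongr; exact traceNorm_nonneg X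
    _ ≤ Fintype.card ι * traceNorm X := by
        gcongr
        · exact traceNorm_nonneg X
        · exact mul_le_of_le_one_right (Nat.cast_nonneg _) hH

theorem w1Norm_le_card_mul_traceNorm
    {X : Matrix (∀ j, d j) (∀ j, d j) ℂ} (hX : X.IsHermitian) (hX₀ : X.trace = 0) :
    w1Norm X ≤ Fintype.card ι * traceNorm X := by
  refine csSup_le ⟨0, 0, Matrix.isHermitian_zero, ?_, by simp⟩ ?_
  · exact (lipNorm_le_two_mul_opNorm 0).trans (by simp [opNorm_eq_norm])
  · rintro _ ⟨H, -, hH, rfl⟩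
    exact re_trace_mul_le_card_mul_traceNorm hH hX hX₀

theorem half_traceNorm_le_w1Norm
    {X : Matrix (∀ j, d j) (∀ j, d j) ℂ} (hX : X.IsHermitian) (hX₀ : X.trace = 0) :
    1 / 2 * traceNorm X ≤ w1Norm X := by
  set H := matFun (fun t => SignType.sign t / 2) X
  have hH : lipNorm H ≤ 1 := by
    refine (lipNorm_le_two_mul_opNorm H).trans ?_
    have := norm_matFun_le hX (fun t => (SignType.sign t : ℝ) / 2) (r := 1 / 2) (by norm_num)
      fun i => by rcases lt_trichotomy (hX.eigenvalues i) 0 with h | h | h <;> simp [h, abs_div]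
    rw [opNorm_eq_norm]
    linarith
  have htrace : (H * X).trace.re = 1 / 2 * traceNorm X := by
    rw [trace_mul_eq_sum_eigenvalues hX, star_eigenvectorUnitary_mul_matFun_mul, traceNorm,
      dif_pos hX, Finset.mul_sum, Complex.re_sum]
    refine Finset.sum_congr rfl fun i _ => ?_
    simp [Matrix.diagonal_apply_eq, ← Complex.ofReal_mul, div_mul_eq_mul_div]
    ring
  unfold w1Norm
  refine le_csSup ⟨Fintype.card ι * traceNorm X, ?_⟩
    ⟨H, matFun_isHermitian _ _, hH, htrace.symm⟩
  rintro _ ⟨H', -, hH', rfl⟩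
  exact re_trace_mul_le_card_mul_traceNorm hH' hX hX₀

end Multipartite

theorem stmt7_general {ι : Type*} [Fintype ι] [DecidableEq ι] {d : ι → Type*}
    [∀ i, Fintype (d i)] [∀ i, DecidableEq (d i)]
    (ρ σ : Matrix (∀ j, d j) (∀ j, d j) ℂ) (hρ : IsState ρ) (hσ : IsState σ) :
    (1 / 2) * traceNorm (ρ - σ) ≤ w1Norm (ρ - σ) ∧
      w1Norm (ρ - σ) ≤ (Fintype.card ι : ℝ) * traceNorm (ρ - σ) := by
  obtain ⟨x⟩ : Nonempty (∀ j, d j) := by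
    by_contra h
    rw [not_nonempty_iff] at h
    simpa [Matrix.trace] using hρ.2
  have : ∀ i, Nonempty (d i) := fun i => ⟨x i⟩
  have hX : (ρ - σ).IsHermitian := hρ.1.1.sub hσ.1.1
  have hX₀ : (ρ - σ).trace = 0 := by rw [Matrix.trace_sub, hρ.2, hσ.2, sub_self]
  exact ⟨half_traceNorm_le_w1Norm hX hX₀, w1Norm_le_card_mul_traceNorm hX hX₀⟩

/-- The quantum Wasserstein distance of order 1 on an `n`-fold tensor product satisfies
`(1/2)‖ρ − σ‖₁ ≤ ‖ρ − σ‖_{W₁} ≤ n‖ρ − σ‖₁` for all states `ρ, σ`. -/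
theorem stmt7 {ι : Type*} [Fintype ι] [DecidableEq ι] [Nonempty ι] {d : ι → Type*}
    [∀ i, Fintype (d i)] [∀ i, DecidableEq (d i)]
    (ρ σ : Matrix (∀ j, d j) (∀ j, d j) ℂ) (hρ : IsState ρ) (hσ : IsState σ) :
    (1 / 2) * traceNorm (ρ - σ) ≤ w1Norm (ρ - σ) ∧
      w1Norm (ρ - σ) ≤ (Fintype.card ι : ℝ) * traceNorm (ρ - σ) :=
  stmt7_general ρ σ hρ hσ

end Paper
end
end

section
/- Classical MCMI decay from complete analyticity (single-site case): let μ be a finite-volume Gibbs measure of a classical spin system on Λ with fixed boundary condition, and let C = {x} be a single site. If the system is completely analytic with constants K, ξ (i.e. ‖μ^τ_{V,Δ}/μ^{τ'}_{V,Δ} − 1‖_∞ ≤ K e^{−dist(x,Δ)/ξ} for boundary conditions τ, τ' differing only at x ∈ ∂V), then for any partition Λ = A ⊔ B ⊔ C ⊔ D, ‖log(μ_{A|CD}/μ_{A|D})‖_∞ ≤ K e^{−dist(A,C)/ξ}. -/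
/-!
Summing over the spin at `x₀` writes `μ_{A|D}(η)` as the mediant `(a + a') / (q + q')` of
`μ_{A|CD}(η) = a / q` and `μ_{A|CD}(η') = a' / q'`, where `η'` is `η` flipped at `x₀`.
A mediant lies between the two fractions, so by monotonicity of `log` the quantity
`|log (μ_{A|CD}/μ_{A|D})|` is at most `|log (μ_{A|CD}(η)/μ_{A|CD}(η'))|`, which complete
analyticity bounds through `log t ≤ t - 1` applied to the ratio and to its inverse.
-/

open scoped BigOperators Classical

noncomputable section

namespace Paper

variable {Λ : Type*} [Fintype Λ] [DecidableEq Λ]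

/-- Marginal probability of a distribution `μ` on configurations: the probability that the
configuration agrees with `τ` on the region `T`. -/
def margP (T : Finset Λ) (μ : (Λ → Bool) → ℝ) (τ : Λ → Bool) : ℝ :=
  ∑ ω : Λ → Bool, if ∀ k ∈ T, ω k = τ k then μ ω else 0

/-- Conditional probability of the configuration on `A` given the configuration on `T`. -/
def condP (A T : Finset Λ) (μ : (Λ → Bool) → ℝ) (τ : Λ → Bool) : ℝ :=
  margP (A ∪ T) μ τ / margP T μ τ

/-- Distance between two finite sets of sites. -/
def fdistC (dst : Λ → Λ → ℝ) (A C : Finset Λ) : ℝ :=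
  sInf {r : ℝ | ∃ a ∈ A, ∃ c ∈ C, r = dst a c}

lemma add_div_add_mem_uIcc {a a' q q' : ℝ} (hq : 0 < q) (hq' : 0 < q') :
    (a + a') / (q + q') ∈ Set.uIcc (a / q) (a' / q') := by
  have hqq : 0 < q + q' := by positivity
  rcases le_total (a / q) (a' / q') with h | h
  · rw [div_le_div_iff₀ hq hq'] at h
    exact Set.mem_uIcc_of_le (by rw [div_le_div_iff₀ hq hqq]; nlinarith)
      (by rw [div_le_div_iff₀ hqq hq']; nlinarith)
  · rw [div_le_div_iff₀ hq' hq] at h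
    exact Set.mem_uIcc_of_ge (by rw [div_le_div_iff₀ hq' hqq]; nlinarith)
      (by rw [div_le_div_iff₀ hqq hq]; nlinarith)

lemma abs_log_le_of_abs_sub_one_le {t ε : ℝ} (ht : 0 < t) (h : |t - 1| ≤ ε)
    (hinv : |t⁻¹ - 1| ≤ ε) : |Real.log t| ≤ ε := by
  have hlog := Real.log_le_sub_one_of_pos ht
  have hlog_inv := Real.log_le_sub_one_of_pos (inv_pos.mpr ht)
  rw [Real.log_inv] at hlog_inv
  rw [abs_le]
  constructor <;> linarith [le_abs_self (t - 1), le_abs_self (t⁻¹ - 1)]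

lemma abs_log_div_mediant_le {a a' q q' ε : ℝ} (ha : 0 < a) (ha' : 0 < a') (hq : 0 < q)
    (hq' : 0 < q') (h : |(a / q) / (a' / q') - 1| ≤ ε) (h' : |(a' / q') / (a / q) - 1| ≤ ε) :
    |Real.log ((a / q) / ((a + a') / (q + q')))| ≤ ε := by
  have hr : 0 < a / q := by positivity
  have hr' : 0 < a' / q' := by positivity
  have hlog : |Real.log ((a / q) / (a' / q'))| ≤ ε :=
    abs_log_le_of_abs_sub_one_le (by positivity) h (by rwa [inv_div])
  have hmediant :
      Real.log ((a + a') / (q + q')) ∈ Set.uIcc (Real.log (a / q)) (Real.log (a' / q')) :=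
    (Real.strictMonoOn_log.monotoneOn.mono fun _ hx => (lt_min hr hr').trans_le hx.1).mapsTo_uIcc
      (add_div_add_mem_uIcc hq hq')
  calc |Real.log ((a / q) / ((a + a') / (q + q')))|
      = |Real.log ((a + a') / (q + q')) - Real.log (a / q)| := by
        rw [Real.log_div hr.ne' (by positivity), abs_sub_comm]
    _ ≤ |Real.log (a' / q') - Real.log (a / q)| := Set.abs_sub_left_of_mem_uIcc hmediant
    _ ≤ ε := by rwa [abs_sub_comm, ← Real.log_div hr.ne' hr'.ne']

lemma margP_pos (T : Finset Λ) {μ : (Λ → Bool) → ℝ} (hμ : ∀ ω, 0 < μ ω) (τ : Λ → Bool) :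
    0 < margP T μ τ :=
  Finset.sum_pos' (fun ω _ => by split_ifs <;> simp [(hμ ω).le])
    ⟨τ, Finset.mem_univ _, by simpa using hμ τ⟩

lemma margP_eq_margP_insert_add_margP_insert_update (T : Finset Λ) (μ : (Λ → Bool) → ℝ)
    {x : Λ} (hx : x ∉ T) (η : Λ → Bool) :
    margP T μ η = margP (insert x T) μ η
      + margP (insert x T) μ (Function.update η x (!η x)) := by
  unfold margP
  rw [← Finset.sum_add_distrib]
  refine Finset.sum_congr rfl fun ω _ => ?_
  have hflip : (∀ k ∈ T, ω k = Function.update η x (!η x) k) ↔ ∀ k ∈ T, ω k = η k :=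
    forall₂_congr fun k hk => by rw [Function.update_of_ne (ne_of_mem_of_not_mem hk hx)]
  simp only [Finset.forall_mem_insert, Function.update_self, hflip]
  by_cases h : ∀ k ∈ T, ω k = η k <;> cases ω x <;> cases η x <;> simp [h]

lemma condP_eq_mediant {A D : Finset Λ} {x : Λ} (hxA : x ∉ A) (hxD : x ∉ D)
    (μ : (Λ → Bool) → ℝ) (η : Λ → Bool) :
    condP A D μ η =
      (margP (A ∪ insert x D) μ η + margP (A ∪ insert x D) μ (Function.update η x (!η x))) /
        (margP (insert x D) μ η + margP (insert x D) μ (Function.update η x (!η x))) := by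
  have hxAD : x ∉ A ∪ D := Finset.notMem_union.mpr ⟨hxA, hxD⟩
  rw [condP, Finset.union_insert, ← margP_eq_margP_insert_add_margP_insert_update _ _ hxAD,
    ← margP_eq_margP_insert_add_margP_insert_update _ _ hxD]

theorem stmt17_general (dst : Λ → Λ → ℝ) (μ : (Λ → Bool) → ℝ)
    (hμpos : ∀ ω, 0 < μ ω) (K ξ : ℝ)
    (A C D : Finset Λ) (x₀ : Λ) (hC : C = {x₀}) (hAC : Disjoint A C) (hCD : Disjoint C D)
    (hCA : ∀ η η' : Λ → Bool, (∀ k, k ≠ x₀ → η k = η' k) →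
      |condP A (C ∪ D) μ η / condP A (C ∪ D) μ η' - 1|
        ≤ K * Real.exp (-(fdistC dst A C / ξ))) :
    ∀ η : Λ → Bool,
      |Real.log (condP A (C ∪ D) μ η / condP A D μ η)|
        ≤ K * Real.exp (-(fdistC dst A C / ξ)) := by
  intro η
  subst hC
  have hxA : x₀ ∉ A := Finset.disjoint_singleton_right.mp hAC
  have hxD : x₀ ∉ D := Finset.disjoint_singleton_left.mp hCD
  rw [← Finset.insert_eq] at hCA ⊢
  set η' := Function.update η x₀ (!η x₀)
  have hflip : ∀ k, k ≠ x₀ → η k = η' k := fun k hk => (Function.update_of_ne hk _ _).symm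
  rw [condP_eq_mediant hxA hxD]
  exact abs_log_div_mediant_le (margP_pos _ hμpos _) (margP_pos _ hμpos _)
    (margP_pos _ hμpos _) (margP_pos _ hμpos _)
    (hCA η η' hflip) (hCA η' η fun k hk => (hflip k hk).symm)

/-- **Classical MCMI decay from complete analyticity (single-site case).** Let `μ` be a
finite-volume Gibbs measure of a classical spin system on `Λ` (with full support), and let
`C = {x₀}` be a single site.  If the system is completely analytic with constants `K, ξ` —
expressed, via the identification of finite-volume Gibbs marginals with conditional
distributions, as the bound on the ratio of the conditional distributions of `A` given `C ∪ D`
under a single spin flip at `x₀` — then for any partition `Λ = A ⊔ B ⊔ C ⊔ D`,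
`‖log(μ_{A|CD}/μ_{A|D})‖_∞ ≤ K·e^{−dist(A,C)/ξ}`. -/
theorem stmt17 (dst : Λ → Λ → ℝ) (μ : (Λ → Bool) → ℝ)
    (hμpos : ∀ ω, 0 < μ ω) (hμ1 : ∑ ω, μ ω = 1)
    (K ξ : ℝ) (hK : 0 ≤ K) (hξ : 0 < ξ)
    (A B C D : Finset Λ) (x₀ : Λ) (hC : C = {x₀})
    (hpart : A ∪ B ∪ C ∪ D = Finset.univ)
    (hAB : Disjoint A B) (hAC : Disjoint A C) (hAD : Disjoint A D)
    (hBC : Disjoint B C) (hBD : Disjoint B D) (hCD : Disjoint C D)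
    (hCA : ∀ η η' : Λ → Bool, (∀ k, k ≠ x₀ → η k = η' k) →
      |condP A (C ∪ D) μ η / condP A (C ∪ D) μ η' - 1|
        ≤ K * Real.exp (-(fdistC dst A C / ξ))) :
    ∀ η : Λ → Bool,
      |Real.log (condP A (C ∪ D) μ η / condP A D μ η)|
        ≤ K * Real.exp (-(fdistC dst A C / ξ)) :=
  stmt17_general dst μ hμpos K ξ A C D x₀ hC hAC hCD hCA

end Paper
end
end
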